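/- The category of adaptors on nonempty sets is isomorphic, as a category, to Set₁ × Set₁^op: the assignment (X,S) ↦ (X,S) on objects and (f,g) ↦ adaptor(f,g) on morphisms is a functor Set₁ × Set₁^op → Lens that is bijective on objects and fully faithful onto the subcategory of adaptors. -/

import Mathlib

structure Lens (X S Y R : Type) where
  view : X → Y
  update : X → R → S

/-- Composition: `Lens.comp μ λ` is μ ∘ λ. -/
def Lens.comp {X S Y R Z Q : Type} (m : Lens Y R Z Q) (l : Lens X S Y R) :
    Lens X S Z Q :=
  ⟨m.view ∘ l.view, fun x q => l.update x (m.update (l.view x) q)⟩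

def Lens.idLens (X S : Type) : Lens X S X S := ⟨id, fun _ s => s⟩

def Lens.tensor {X S Y R X' S' Y' R' : Type}
    (l : Lens X S Y R) (m : Lens X' S' Y' R') :
    Lens (X × X') (S × S') (Y × Y') (R × R') :=
  ⟨fun p => (l.view p.1, m.view p.2),
   fun p r => (l.update p.1 r.1, m.update p.2 r.2)⟩

def Lens.adaptor {X S Y R : Type} (f : X → Y) (g : R → S) : Lens X S Y R :=
  ⟨f, fun _ r => g r⟩

def Lens.IsAdaptor {X S Y R : Type} (l : Lens X S Y R) : Prop :=
  ∃ g : R → S, ∀ x r, l.update x r = g r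

def Lens.counit (X S : Type) : Lens (X × S) (S × X) Unit Unit :=
  ⟨fun _ => (), fun p _ => (p.2, p.1)⟩

namespace Lens

variable {X S Y R Z Q : Type}

theorem adaptor_id : adaptor (id : X → X) (id : S → S) = idLens X S := rfl

theorem adaptor_comp (f : X → Y) (g : R → S) (f' : Y → Z) (g' : Q → R) :
    adaptor (f' ∘ f) (g ∘ g') = (adaptor f' g').comp (adaptor f g) := rfl

-- The update of an adaptor ignores its first argument, so `g` can be read off at any point of `X`.
theorem adaptor_inj [Nonempty X] {f f' : X → Y} {g g' : R → S} :
    adaptor f g = adaptor f' g' ↔ f = f' ∧ g = g' := by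
  constructor
  · intro h
    have hupdate := congrArg update h
    exact ⟨congrArg view h, funext (congrFun (congrFun hupdate (Classical.arbitrary X)))⟩
  · rintro ⟨rfl, rfl⟩
    rfl

theorem eq_adaptor_of_update_eq (l : Lens X S Y R) {g : R → S}
    (hg : ∀ x r, l.update x r = g r) : l = adaptor l.view g := by
  obtain ⟨view, update⟩ := l
  congr
  funext x r
  exact hg x r

end Lens

theorem adaptor_functor_fully_faithful_general {X S Y R Z Q : Type}
    [Nonempty X] :
    (Lens.adaptor (id : X → X) (id : S → S) = Lens.idLens X S) ∧
    (∀ (f : X → Y) (g : R → S) (f' : Y → Z) (g' : Q → R),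
      Lens.adaptor (f' ∘ f) (g ∘ g') =
        (Lens.adaptor f' g').comp (Lens.adaptor f g)) ∧
    Function.Bijective
      (fun fg : (X → Y) × (R → S) =>
        (⟨Lens.adaptor fg.1 fg.2, fg.2, fun _ _ => rfl⟩ :
          {l : Lens X S Y R // l.IsAdaptor})) := by
  refine ⟨Lens.adaptor_id, Lens.adaptor_comp, ?injective, ?surjective⟩
  case injective =>
    rintro ⟨f, g⟩ ⟨f', g'⟩ h
    obtain ⟨rfl, rfl⟩ := Lens.adaptor_inj.mp (congrArg Subtype.val h)
    rfl
  case surjective =>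
    rintro ⟨l, g, hg⟩
    exact ⟨(l.view, g), Subtype.ext (l.eq_adaptor_of_update_eq hg).symm⟩

theorem adaptor_functor_fully_faithful {X S Y R Z Q : Type}
    [Nonempty X] [Nonempty S] [Nonempty Y] [Nonempty R] :
    (Lens.adaptor (id : X → X) (id : S → S) = Lens.idLens X S) ∧
    (∀ (f : X → Y) (g : R → S) (f' : Y → Z) (g' : Q → R),
      Lens.adaptor (f' ∘ f) (g ∘ g') =
        (Lens.adaptor f' g').comp (Lens.adaptor f g)) ∧
    Function.Bijective
      (fun fg : (X → Y) × (R → S) =>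
        (⟨Lens.adaptor fg.1 fg.2, fg.2, fun _ _ => rfl⟩ :
          {l : Lens X S Y R // l.IsAdaptor})) :=
  adaptor_functor_fully_faithful_general
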